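/- If L is the Laplacian of a weight-balanced strongly connected weighted digraph and R ∈ ℝ^{N×(N−1)} satisfies RᵀR = I_{N−1} and Rᵀ1_N = 0, then for every β > 0 and t ≥ t₀ ≥ 0, ‖e^{−β RᵀLR (t−t₀)}‖ ≤ e^{−β λ̂₂ (t−t₀)}, where λ̂₂ > 0 is the smallest nonzero eigenvalue of Sym(L) = (L+Lᵀ)/2. -/

import Mathlib

open Matrix
open scoped RealInnerProductSpace

/-!
Write `S = (L + Lᵀ)/2`. Since `L` is weight-balanced, `2 zᵀ L z = ∑ᵢⱼ aᵢⱼ (zᵢ - zⱼ)²`, so by strong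
connectivity the kernel of `S` consists of the constant vectors. For `z = R y` we have
`‖z‖ = ‖y‖`, `z ⊥ 𝟙` and `yᵀ (Rᵀ L R) y = zᵀ S z`; expanding `z` in an orthonormal eigenbasis of
`S` gives `yᵀ (Rᵀ L R) y ≥ λ̂₂ ‖y‖²`. Hence `M = -β (t - t₀) Rᵀ L R` satisfies
`⟪M y, y⟫ ≤ -β λ̂₂ (t - t₀) ‖y‖²`, and for such an operator the norm of `e^{s M} x` decays at
least like `e^{-β λ̂₂ (t - t₀) s}`.
-/

section ExpBound

variable {E : Type*} [NormedAddCommGroup E] [InnerProductSpace ℝ E]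

theorem antitone_norm_of_inner_deriv_self_nonpos {h h' : ℝ → E}
    (hh : ∀ s, HasDerivAt h (h' s) s) (hneg : ∀ s, ⟪h' s, h s⟫ ≤ 0) :
    Antitone fun s => ‖h s‖ := by
  have hd : ∀ s, HasDerivAt (fun s => ‖h s‖ ^ 2) (2 * ⟪h' s, h s⟫) s := fun s => by
    simpa only [real_inner_self_eq_norm_sq, real_inner_comm (h s), two_mul]
      using (hh s).inner ℝ (hh s)
  have hsq : Antitone fun s => ‖h s‖ ^ 2 :=
    antitone_of_deriv_nonpos (fun s => (hd s).differentiableAt) fun s => by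
      rw [(hd s).deriv]; linarith [hneg s]
  exact fun s t hst =>
    (pow_le_pow_iff_left₀ (norm_nonneg _) (norm_nonneg _) two_ne_zero).1 (hsq hst)

variable [CompleteSpace E]

theorem hasDerivAt_exp_smul_apply (T : E →L[ℝ] E) (x : E) (s : ℝ) :
    HasDerivAt (fun s : ℝ => NormedSpace.exp (s • T) x) (T (NormedSpace.exp (s • T) x)) s := by
  simpa using (hasDerivAt_exp_smul_const' T s).clm_apply (hasDerivAt_const s x)

theorem norm_exp_le_of_inner_self_le (T : E →L[ℝ] E) (a : ℝ)
    (h : ∀ y, ⟪T y, y⟫ ≤ a * ‖y‖ ^ 2) : ‖NormedSpace.exp T‖ ≤ Real.exp a := by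
  refine ContinuousLinearMap.opNorm_le_bound _ (Real.exp_pos a).le fun x => ?_
  -- `g` solves `g' = (T - a) g`, and `T - a` is dissipative.
  set g : ℝ → E := fun s => Real.exp (-a * s) • NormedSpace.exp (s • T) x
  have hg : ∀ s, HasDerivAt g (T (g s) - a • g s) s := fun s => by
    have he : HasDerivAt (fun s => Real.exp (-a * s)) (Real.exp (-a * s) * -a) s := by
      simpa using ((hasDerivAt_id s).const_mul (-a)).exp
    refine (he.smul (hasDerivAt_exp_smul_apply T x s)).congr_deriv ?_
    simp only [g, map_smul]
    module
  have hdecay := antitone_norm_of_inner_deriv_self_nonpos hg fun s => by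
    rw [inner_sub_left, real_inner_smul_left, real_inner_self_eq_norm_sq]
    linarith [h (g s)]
  have h01 : Real.exp (-a) * ‖NormedSpace.exp T x‖ ≤ ‖x‖ := by
    simpa [g, norm_smul] using hdecay zero_le_one
  rwa [Real.exp_neg, inv_mul_le_iff₀ (Real.exp_pos a)] at h01

end ExpBound

open scoped Matrix.Norms.L2Operator in
theorem Matrix.toEuclideanCLM_exp {n : Type*} [Fintype n] [DecidableEq n] (B : Matrix n n ℝ) :
    toEuclideanCLM (𝕜 := ℝ) (NormedSpace.exp B) = NormedSpace.exp (toEuclideanCLM (𝕜 := ℝ) B) :=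
  let _ : NormedAlgebra ℚ (Matrix n n ℝ) := NormedAlgebra.restrictScalars ℚ ℝ _
  NormedSpace.map_exp _ (AddMonoidHomClass.isometry_of_norm _ fun _ => rfl).continuous B

theorem EuclideanSpace.real_norm_sq_eq_dotProduct {n : Type*} [Fintype n]
    (x : EuclideanSpace ℝ n) : ‖x‖ ^ 2 = WithLp.ofLp x ⬝ᵥ WithLp.ofLp x := by
  rw [EuclideanSpace.real_norm_sq_eq]
  simp [dotProduct, sq]

theorem LinearMap.IsSymmetric.mul_norm_sq_le_inner_of_mem_orthogonal_ker
    {E : Type*} [NormedAddCommGroup E] [InnerProductSpace ℝ E] [FiniteDimensional ℝ E]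
    {T : E →ₗ[ℝ] E} (hT : T.IsSymmetric) {c : ℝ}
    (hc : ∀ μ, μ ≠ 0 → Module.End.HasEigenvalue T μ → c ≤ μ)
    {x : E} (hx : x ∈ (LinearMap.ker T)ᗮ) : c * ‖x‖ ^ 2 ≤ ⟪T x, x⟫ := by
  set b := hT.eigenvectorBasis rfl
  have hterm : ∀ i, c * (⟪x, b i⟫ * ⟪b i, x⟫) ≤ ⟪T x, b i⟫ * ⟪b i, x⟫ := fun i => by
    rw [hT x (b i), hT.apply_eigenvectorBasis, real_inner_smul_right, RCLike.ofReal_real_eq_id,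
      id_eq, real_inner_comm x, mul_assoc]
    by_cases hμ : hT.eigenvalues rfl i = 0
    · have hker : b i ∈ LinearMap.ker T := by simp [b, hμ]
      simp [Submodule.inner_left_of_mem_orthogonal hker hx]
    · exact mul_le_mul_of_nonneg_right (hc _ hμ (hT.hasEigenvalue_eigenvalues rfl i))
        (mul_self_nonneg _)
  calc c * ‖x‖ ^ 2 = ∑ i, c * (⟪x, b i⟫ * ⟪b i, x⟫) := by
        rw [← Finset.mul_sum, b.sum_inner_mul_inner, real_inner_self_eq_norm_sq]
    _ ≤ ∑ i, ⟪T x, b i⟫ * ⟪b i, x⟫ := Finset.sum_le_sum fun i _ => hterm i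
    _ = ⟪T x, x⟫ := b.sum_inner_mul_inner _ _

section Matrix

variable {n : Type*}

theorem isHermitian_half_smul_add_transpose (M : Matrix n n ℝ) :
    ((1 / 2 : ℝ) • (M + Mᵀ)).IsHermitian := by
  ext i j
  simp [add_comm, mul_add]

variable [Fintype n]

theorem Matrix.IsHermitian.mul_dotProduct_self_le_dotProduct_mulVec [DecidableEq n]
    {S : Matrix n n ℝ} (hS : S.IsHermitian) {c : ℝ}
    (hc : ∀ μ, μ ≠ 0 → Module.End.HasEigenvalue (toLin' S) μ → c ≤ μ)
    {z : n → ℝ} (hz : ∀ v, S *ᵥ v = 0 → v ⬝ᵥ z = 0) : c * (z ⬝ᵥ z) ≤ z ⬝ᵥ S *ᵥ z := by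
  have hT : (toEuclideanCLM (𝕜 := ℝ) S : EuclideanSpace ℝ n →ₗ[ℝ] _).IsSymmetric :=
    isSymmetric_toEuclideanLin_iff.mpr hS
  have key := hT.mul_norm_sq_le_inner_of_mem_orthogonal_ker (c := c) ?_ (x := WithLp.toLp 2 z) ?_
  · rw [EuclideanSpace.real_norm_sq_eq_dotProduct] at key
    simpa [EuclideanSpace.inner_eq_star_dotProduct, dotProduct_comm] using key
  · intro μ hμ hμS
    obtain ⟨v, hv⟩ := hμS.exists_hasEigenvector
    refine hc μ hμ (Module.End.hasEigenvalue_of_hasEigenvector (x := WithLp.ofLp v) ⟨?_, ?_⟩)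
    · rw [Module.End.mem_eigenspace_iff, toLin'_apply]
      simpa using congrArg WithLp.ofLp hv.apply_eq_smul
    · simpa using hv.2
  · rw [Submodule.mem_orthogonal]
    intro v hv
    have hSv : S *ᵥ WithLp.ofLp v = 0 := by simpa using congrArg WithLp.ofLp hv
    simpa [EuclideanSpace.inner_eq_star_dotProduct, dotProduct_comm] using hz _ hSv

theorem dotProduct_half_smul_add_transpose_mulVec {K : Type*} [Field K] [NeZero (2 : K)]
    (M : Matrix n n K) (z : n → K) :
    z ⬝ᵥ ((1 / 2 : K) • (M + Mᵀ)) *ᵥ z = z ⬝ᵥ M *ᵥ z := by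
  rw [smul_mulVec, add_mulVec, dotProduct_smul, dotProduct_add, dotProduct_mulVec z Mᵀ,
    vecMul_transpose, dotProduct_comm (M *ᵥ z), smul_eq_mul, ← two_mul, ← mul_assoc,
    one_div_mul_cancel two_ne_zero, one_mul]

theorem dotProduct_transpose_mul_mul_mulVec {m K : Type*} [Fintype m] [CommSemiring K]
    (R : Matrix n m K) (M : Matrix n n K) (y : m → K) :
    y ⬝ᵥ (Rᵀ * M * R) *ᵥ y = R *ᵥ y ⬝ᵥ M *ᵥ (R *ᵥ y) := by
  rw [← mulVec_mulVec, ← mulVec_mulVec, dotProduct_mulVec, vecMul_transpose, dotProduct_comm]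

theorem dotProduct_mulVec_eq_zero_of_forall_eq {m K : Type*} [Fintype m] [CommSemiring K]
    {R : Matrix n m K} (hR : Rᵀ *ᵥ (fun _ => 1) = 0) {v : n → K} (hv : ∀ i j, v i = v j)
    (w : m → K) : v ⬝ᵥ R *ᵥ w = 0 := by
  rcases isEmpty_or_nonempty n with hn | ⟨⟨i₀⟩⟩
  · simp [dotProduct]
  · have hconst : v = v i₀ • fun _ => 1 := funext fun i => by simp [hv i i₀]
    rw [dotProduct_mulVec, ← mulVec_transpose, hconst, mulVec_smul, hR, smul_zero,
      zero_dotProduct]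

theorem eq_of_sum_mul_sq_sub_eq_zero {A : Matrix n n ℝ} (hA : ∀ i j, 0 ≤ A i j)
    (hconn : ∀ i j, Relation.ReflTransGen (fun a b => 0 < A a b) i j) {v : n → ℝ}
    (hv : ∑ i, ∑ j, A i j * (v i - v j) ^ 2 = 0) (i j : n) : v i = v j := by
  have hnonneg : ∀ i j, 0 ≤ A i j * (v i - v j) ^ 2 := fun i j => by
    have := hA i j; positivity
  have hterm : ∀ i j, A i j * (v i - v j) ^ 2 = 0 := fun i j => by
    rw [Finset.sum_eq_zero_iff_of_nonneg fun i _ => Finset.sum_nonneg fun j _ => hnonneg i j] at hv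
    exact (Finset.sum_eq_zero_iff_of_nonneg fun j _ => hnonneg i j).1 (hv i (Finset.mem_univ _)) j
      (Finset.mem_univ _)
  induction hconn i j with
  | refl => rfl
  | @tail b c _ hpos ih =>
    rw [ih]
    simpa [hpos.ne', sub_eq_zero] using hterm b c

variable [DecidableEq n]

def outLaplacian {R : Type*} [Ring R] (A : Matrix n n R) : Matrix n n R :=
  diagonal (fun i => ∑ j, A i j) - A

theorem two_mul_dotProduct_outLaplacian_mulVec {R : Type*} [CommRing R] {A : Matrix n n R}
    (hbal : ∀ i, ∑ j, A i j = ∑ j, A j i) (z : n → R) :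
    2 * (z ⬝ᵥ outLaplacian A *ᵥ z) = ∑ i, ∑ j, A i j * (z i - z j) ^ 2 := by
  have hin : ∑ i, ∑ j, A i j * z j ^ 2 = ∑ i, (∑ j, A i j) * z i ^ 2 := by
    rw [Finset.sum_comm]
    simp_rw [hbal, Finset.sum_mul]
  have hexp : ∀ i j, A i j * (z i - z j) ^ 2
      = A i j * z i ^ 2 + A i j * z j ^ 2 - 2 * (z i * (A i j * z j)) := fun i j => by ring
  have hquad : z ⬝ᵥ outLaplacian A *ᵥ z
      = ∑ i, (∑ j, A i j) * z i ^ 2 - ∑ i, ∑ j, z i * (A i j * z j) := by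
    rw [outLaplacian, sub_mulVec, dotProduct_sub]
    congr 1
    · simp only [dotProduct, mulVec_diagonal]
      exact Finset.sum_congr rfl fun i _ => by ring
    · simp only [dotProduct, mulVec, Finset.mul_sum]
  simp only [hquad, hexp, Finset.sum_sub_distrib, Finset.sum_add_distrib, hin, ← Finset.mul_sum,
    ← Finset.sum_mul]
  ring

theorem eq_of_half_smul_add_transpose_outLaplacian_mulVec_eq_zero {A : Matrix n n ℝ}
    (hA : ∀ i j, 0 ≤ A i j) (hconn : ∀ i j, Relation.ReflTransGen (fun a b => 0 < A a b) i j)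
    (hbal : ∀ i, ∑ j, A i j = ∑ j, A j i) {v : n → ℝ}
    (hv : ((1 / 2 : ℝ) • (outLaplacian A + (outLaplacian A)ᵀ)) *ᵥ v = 0) (i j : n) :
    v i = v j :=
  eq_of_sum_mul_sq_sub_eq_zero hA hconn (by
    rw [← two_mul_dotProduct_outLaplacian_mulVec hbal, ← dotProduct_half_smul_add_transpose_mulVec,
      hv, dotProduct_zero, mul_zero]) i j

theorem mul_dotProduct_self_le_dotProduct_transpose_mul_outLaplacian_mul_mulVec {m : Type*}
    [Fintype m] [DecidableEq m] {A : Matrix n n ℝ} (hA : ∀ i j, 0 ≤ A i j)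
    (hconn : ∀ i j, Relation.ReflTransGen (fun a b => 0 < A a b) i j)
    (hbal : ∀ i, ∑ j, A i j = ∑ j, A j i) {R : Matrix n m ℝ} (hR1 : Rᵀ * R = 1)
    (hR2 : Rᵀ *ᵥ (fun _ => 1) = 0) {c : ℝ}
    (hc : ∀ μ, μ ≠ 0 → Module.End.HasEigenvalue
      (toLin' ((1 / 2 : ℝ) • (outLaplacian A + (outLaplacian A)ᵀ))) μ → c ≤ μ)
    (y : m → ℝ) : c * (y ⬝ᵥ y) ≤ y ⬝ᵥ (Rᵀ * outLaplacian A * R) *ᵥ y := by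
  have hy : y ⬝ᵥ y = R *ᵥ y ⬝ᵥ R *ᵥ y := by
    simpa [hR1] using dotProduct_transpose_mul_mul_mulVec R 1 y
  rw [hy, dotProduct_transpose_mul_mul_mulVec, ← dotProduct_half_smul_add_transpose_mulVec]
  exact (isHermitian_half_smul_add_transpose _).mul_dotProduct_self_le_dotProduct_mulVec hc
    fun v hv => dotProduct_mulVec_eq_zero_of_forall_eq hR2
      (eq_of_half_smul_add_transpose_outLaplacian_mulVec_eq_zero hA hconn hbal hv) y

end Matrix

theorem exp_reduced_laplacian_norm_bound_general
    {N : ℕ} (A : Matrix (Fin N) (Fin N) ℝ)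
    (hA : ∀ i j, 0 ≤ A i j)
    (hconn : ∀ i j : Fin N, Relation.ReflTransGen (fun a b => 0 < A a b) i j)
    (L : Matrix (Fin N) (Fin N) ℝ)
    (hL : L = Matrix.diagonal (fun i => ∑ j, A i j) - A)
    (hbal : ∀ i, (∑ j, A i j) = ∑ j, A j i)
    (R : Matrix (Fin N) (Fin (N - 1)) ℝ)
    (hR1 : Rᵀ * R = 1) (hR2 : Rᵀ *ᵥ (fun _ => (1:ℝ)) = 0)
    (lam2 : ℝ)
    (hlam2 : IsLeast {μ : ℝ | μ ≠ 0 ∧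
      Module.End.HasEigenvalue
        (Matrix.toLin' (((1:ℝ)/2) • (L + Lᵀ)) : Module.End ℝ (Fin N → ℝ)) μ} lam2)
    (β t t₀ : ℝ) (hβ : 0 < β) (ht : t₀ ≤ t) :
    ‖Matrix.toEuclideanCLM (𝕜 := ℝ)
        (NormedSpace.exp ((-(β * (t - t₀))) • (Rᵀ * L * R)))‖
      ≤ Real.exp (-(β * lam2 * (t - t₀))) := by
  change L = outLaplacian A at hL
  subst hL
  rw [toEuclideanCLM_exp]
  refine norm_exp_le_of_inner_self_le _ _ fun y => ?_
  have hquad := mul_dotProduct_self_le_dotProduct_transpose_mul_outLaplacian_mul_mulVec hA hconn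
    hbal hR1 hR2 (fun μ hμ hμS => hlam2.2 ⟨hμ, hμS⟩) (WithLp.ofLp y)
  rw [map_smul, FunLike.coe_smul, Pi.smul_apply, real_inner_smul_left, real_inner_comm,
    inner_toEuclideanCLM, EuclideanSpace.real_norm_sq_eq_dotProduct]
  nlinarith [mul_nonneg hβ.le (sub_nonneg.2 ht)]

/-- For a weight-balanced, strongly connected weighted digraph with out-Laplacian `L`
and an orthonormal complement `R` of the all-ones vector, for every `β > 0` and
`t ≥ t₀ ≥ 0` one has `‖e^{−β RᵀLR (t−t₀)}‖ ≤ e^{−β λ̂₂ (t−t₀)}`, where `λ̂₂ > 0` is the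
smallest nonzero eigenvalue of `Sym(L) = (L + Lᵀ)/2` and `‖·‖` is the spectral norm. -/
theorem exp_reduced_laplacian_norm_bound
    {N : ℕ} (A : Matrix (Fin N) (Fin N) ℝ)
    (hA : ∀ i j, 0 ≤ A i j)
    (hconn : ∀ i j : Fin N, Relation.ReflTransGen (fun a b => 0 < A a b) i j)
    (L : Matrix (Fin N) (Fin N) ℝ)
    (hL : L = Matrix.diagonal (fun i => ∑ j, A i j) - A)
    (hbal : ∀ i, (∑ j, A i j) = ∑ j, A j i)
    (R : Matrix (Fin N) (Fin (N - 1)) ℝ)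
    (hR1 : Rᵀ * R = 1) (hR2 : Rᵀ *ᵥ (fun _ => (1:ℝ)) = 0)
    (lam2 : ℝ) (hlam2pos : 0 < lam2)
    (hlam2 : IsLeast {μ : ℝ | μ ≠ 0 ∧
      Module.End.HasEigenvalue
        (Matrix.toLin' (((1:ℝ)/2) • (L + Lᵀ)) : Module.End ℝ (Fin N → ℝ)) μ} lam2)
    (β t t₀ : ℝ) (hβ : 0 < β) (ht₀ : 0 ≤ t₀) (ht : t₀ ≤ t) :
    ‖Matrix.toEuclideanCLM (𝕜 := ℝ)
        (NormedSpace.exp ((-(β * (t - t₀))) • (Rᵀ * L * R)))‖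
      ≤ Real.exp (-(β * lam2 * (t - t₀))) :=
  exp_reduced_laplacian_norm_bound_general A hA hconn L hL hbal R hR1 hR2 lam2 hlam2 β t t₀ hβ ht
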